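/- In the Euler–Maruyama setting with S = D ⊗ D + Δt (C ⊗ C) q, where q = Σ_k μ_k f_k ⊗ f_k with μ_k ≥ 0 and Σ_k μ_k = Tr(Q) < ∞, one has the bound ‖(C ⊗ C) q‖_{L(V⊗V)} ≤ Tr(Q) ‖C‖²_{L(U;L(V))}, and hence ‖D‖²_{L(V)} + Δt Tr(Q) ‖C‖²_{L(U;L(V))} < 1 implies asymptotic mean-square stability. -/

import Mathlib

/-!
Conditionally on `ℱ j` the noise `ΔL j` has mean zero and covariance `Δt Q`, so the cross term
of `‖(D + C ΔL) X‖²` has zero expectation and the quadratic term contributes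
`Δt ∑ₖ μₖ E‖C fₖ X‖²`. Hence `E‖X^{j+1}‖² ≤ (‖D‖² + Δt Tr Q ‖C‖²) E‖X^j‖²` and the second
moments decay geometrically. The only analytic subtlety is integrability: `X^j` is merely square
integrable, but `(X^j)² ⟪ΔL, u⟫²` is integrable because conditioning on `ℱ j` turns `⟪ΔL, u⟫²`
into a constant. The bound on `(C ⊗ C) q` is the triangle inequality for the series
`∑ₖ μₖ C fₖ ⊗ C fₖ` together with `‖A ⊗ B‖ ≤ ‖A‖ ‖B‖`.
-/

open MeasureTheory Filter
open scoped Kronecker RealInnerProductSpace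

noncomputable section

/-- A solution process of the linear recursion `X^{j+1} = (D + E^j) X^j` with
`F_0`-measurable square-integrable initial value (all iterates square-integrable, so that
all tensor expectations exist). -/
def IsSolution {Ω : Type*} {m0 : MeasurableSpace Ω} (μ : MeasureTheory.Measure Ω)
    (ℱ : MeasureTheory.Filtration ℕ m0) {N : ℕ}
    (D : Matrix (Fin N) (Fin N) ℝ) (E : ℕ → Ω → Matrix (Fin N) (Fin N) ℝ)
    (X : ℕ → Ω → Fin N → ℝ) : Prop :=
  (∀ j ω, X (j + 1) ω = (D + E j ω).mulVec (X j ω))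
    ∧ (∀ k, StronglyMeasurable[ℱ 0] fun ω => X 0 ω k)
    ∧ (∀ j k, MeasureTheory.MemLp (fun ω => X j ω k) 2 μ)

/-- The mean-square (second moment) `E[‖X^j‖²]` of a solution process. -/
noncomputable def secondMoment {Ω : Type*} {m0 : MeasurableSpace Ω}
    (μ : MeasureTheory.Measure Ω) {N : ℕ} (X : ℕ → Ω → Fin N → ℝ) (j : ℕ) : ℝ :=
  ∫ ω, ∑ k, (X j ω k) ^ 2 ∂μ

/-- Mean-square stability of the zero solution of the recursion `X^{j+1} = (D + E^j)X^j`. -/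
def MeanSquareStable {Ω : Type*} {m0 : MeasurableSpace Ω} (μ : MeasureTheory.Measure Ω)
    (ℱ : MeasureTheory.Filtration ℕ m0) {N : ℕ}
    (D : Matrix (Fin N) (Fin N) ℝ) (E : ℕ → Ω → Matrix (Fin N) (Fin N) ℝ) : Prop :=
  ∀ ε > (0 : ℝ), ∃ δ > (0 : ℝ), ∀ X : ℕ → Ω → Fin N → ℝ,
    IsSolution μ ℱ D E X → secondMoment μ X 0 < δ → ∀ j, secondMoment μ X j < ε

/-- Asymptotic mean-square stability of the zero solution: mean-square stability together with
the existence of `δ > 0` such that `E[‖X^0‖²] < δ` implies `E[‖X^j‖²] → 0`. -/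
def AsympMeanSquareStable {Ω : Type*} {m0 : MeasurableSpace Ω} (μ : MeasureTheory.Measure Ω)
    (ℱ : MeasureTheory.Filtration ℕ m0) {N : ℕ}
    (D : Matrix (Fin N) (Fin N) ℝ) (E : ℕ → Ω → Matrix (Fin N) (Fin N) ℝ) : Prop :=
  MeanSquareStable μ ℱ D E ∧
    ∃ δ > (0 : ℝ), ∀ X : ℕ → Ω → Fin N → ℝ,
      IsSolution μ ℱ D E X → secondMoment μ X 0 < δ →
        Filter.Tendsto (secondMoment μ X) Filter.atTop (nhds 0)

open Matrix Topology
open scoped Matrix.Norms.L2Operator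

namespace Matrix

variable {l m n p : Type*} [Fintype l] [Fintype m] [Fintype n] [Fintype p]

lemma sum_sq_mulVec_le [DecidableEq n] (A : Matrix m n ℝ) (x : n → ℝ) :
    ∑ i, (A *ᵥ x) i ^ 2 ≤ ‖A‖ ^ 2 * ∑ j, x j ^ 2 := by
  have h := A.l2_opNorm_mulVec (WithLp.toLp 2 x)
  rw [← sq_le_sq₀ (norm_nonneg _) (by positivity), mul_pow, EuclideanSpace.norm_sq_eq,
    EuclideanSpace.norm_sq_eq] at h
  simp only [Real.norm_eq_abs, sq_abs] at h
  exact h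

lemma abs_apply_le_l2_opNorm [DecidableEq n] (A : Matrix m n ℝ) (i : m) (j : n) :
    |A i j| ≤ ‖A‖ := by
  have h := A.sum_sq_mulVec_le (Pi.single j (1 : ℝ))
  have hsingle : ∑ k, (Pi.single j (1 : ℝ) : n → ℝ) k ^ 2 = 1 := by simp [Pi.single_apply]
  rw [mulVec_single_one, hsingle, mul_one] at h
  have := (Finset.single_le_sum (fun k _ => sq_nonneg (A k j)) (Finset.mem_univ i)).trans h
  exact abs_le.mpr (abs_le_of_sq_le_sq' this (norm_nonneg _))

lemma sum_sq_mul_le [DecidableEq m] (A : Matrix l m ℝ) (M : Matrix m n ℝ) :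
    ∑ i, ∑ j, (A * M) i j ^ 2 ≤ ‖A‖ ^ 2 * ∑ i, ∑ j, M i j ^ 2 := by
  rw [Finset.sum_comm, Finset.sum_comm (f := fun i j => M i j ^ 2), Finset.mul_sum]
  exact Finset.sum_le_sum fun j _ => A.sum_sq_mulVec_le fun k => M k j

lemma sum_sq_mul_transpose_le [DecidableEq n] (M : Matrix m n ℝ) (A : Matrix l n ℝ) :
    ∑ i, ∑ j, (M * Aᵀ) i j ^ 2 ≤ ‖A‖ ^ 2 * ∑ i, ∑ j, M i j ^ 2 := by
  rw [← transpose_transpose (M * Aᵀ), transpose_mul, transpose_transpose, Finset.sum_comm,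
    Finset.sum_comm (f := fun i j => M i j ^ 2)]
  exact A.sum_sq_mul_le Mᵀ

lemma l2_opNorm_kronecker_le [DecidableEq m] [DecidableEq n]
    (A : Matrix l m ℝ) (B : Matrix p n ℝ) : ‖A ⊗ₖ B‖ ≤ ‖A‖ * ‖B‖ := by
  rw [l2_opNorm_def]
  refine ContinuousLinearMap.opNorm_le_bound _ (by positivity) fun x => ?_
  -- `x = vec X` and `(A ⊗ₖ B) *ᵥ vec X = vec (B * X * Aᵀ)`: bound both factors in Frobenius norm
  set X : Matrix n m ℝ := of fun b a => x (a, b)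
  rw [← sq_le_sq₀ (norm_nonneg _) (by positivity), mul_pow, mul_pow, EuclideanSpace.norm_sq_eq,
    EuclideanSpace.norm_sq_eq]
  simp only [Real.norm_eq_abs, sq_abs]
  change ∑ i, ((A ⊗ₖ B) *ᵥ vec X) i ^ 2 ≤ _
  rw [kronecker_mulVec_vec]
  calc ∑ i, vec (B * X * Aᵀ) i ^ 2 = ∑ i, ∑ j, (B * X * Aᵀ) j i ^ 2 := Fintype.sum_prod_type _
    _ ≤ ‖A‖ ^ 2 * (‖B‖ ^ 2 * ∑ j, ∑ i, X j i ^ 2) := by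
      rw [Finset.sum_comm]
      refine ((B * X).sum_sq_mul_transpose_le A).trans ?_
      gcongr
      exact B.sum_sq_mul_le X
    _ = ‖A‖ ^ 2 * ‖B‖ ^ 2 * ∑ i, x i ^ 2 := by
      rw [Fintype.sum_prod_type, Finset.sum_comm, mul_assoc]
      rfl

lemma l2_opNorm_tsum_kronecker_self_le {ι : Type*} [DecidableEq n] {w : ι → ℝ}
    (hw : ∀ k, 0 ≤ w k) (hsum : Summable w) {A : ι → Matrix n n ℝ} {c : ℝ}
    (hA : ∀ k, ‖A k‖ ≤ c) :
    ‖(of fun p q : n × n => ∑' k, w k * (A k p.1 q.1 * A k p.2 q.2))‖ ≤ (∑' k, w k) * c ^ 2 := by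
  have hbound : ∀ k, ‖w k • (A k ⊗ₖ A k)‖ ≤ w k * c ^ 2 := fun k => by
    rw [norm_smul, Real.norm_of_nonneg (hw k), sq]
    exact mul_le_mul_of_nonneg_left (((A k).l2_opNorm_kronecker_le (A k)).trans
      (mul_self_le_mul_self (norm_nonneg _) (hA k))) (hw k)
  have hsummable : Summable fun k => w k • (A k ⊗ₖ A k) :=
    .of_norm_bounded (hsum.mul_right _) hbound
  have heq : ∑' k, w k • (A k ⊗ₖ A k)
      = of fun p q : n × n => ∑' k, w k * (A k p.1 q.1 * A k p.2 q.2) :=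
    (Pi.hasSum.2 fun p => Pi.hasSum.2 fun q =>
      (Pi.summable.1 (Pi.summable.1 hsummable p) q).hasSum).tsum_eq
  calc _ = ‖∑' k, w k • (A k ⊗ₖ A k)‖ := by rw [heq]
    _ ≤ ∑' k, w k * c ^ 2 := tsum_of_norm_bounded (hsum.mul_right _).hasSum hbound
    _ = (∑' k, w k) * c ^ 2 := tsum_mul_right

end Matrix

namespace ContinuousLinearMap

variable {U : Type*} [NormedAddCommGroup U] [InnerProductSpace ℝ U] [CompleteSpace U]
  {m n : Type*} [Fintype m] [Fintype n]

-- turns the entries of `C ξ` into the scalar noises `⟪ξ, u⟫` that the covariance speaks about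
def entryRiesz (C : U →L[ℝ] Matrix m n ℝ) (i : m) (j : n) : U :=
  (InnerProductSpace.toDual ℝ U).symm
    ((Matrix.entryLinearMap ℝ ℝ i j).toContinuousLinearMap.comp C)

lemma inner_entryRiesz (C : U →L[ℝ] Matrix m n ℝ) (u : U) (i : m) (j : n) :
    ⟪u, C.entryRiesz i j⟫ = C u i j := by
  rw [real_inner_comm, entryRiesz, InnerProductSpace.toDual_symm_apply]
  rfl

end ContinuousLinearMap

section ConditionalMoments

variable {Ω : Type*} {m m0 : MeasurableSpace Ω} {μ : Measure Ω} [IsFiniteMeasure μ]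

lemma integral_mul_eq_of_condExp_ae_eq_const (hm : m ≤ m0) {F H : Ω → ℝ}
    {c : ℝ} (hF : StronglyMeasurable[m] F) (hH : Integrable H μ)
    (hFH : Integrable (fun ω => F ω * H ω) μ) (hc : μ[H|m] =ᵐ[μ] fun _ => c) :
    ∫ ω, F ω * H ω ∂μ = c * ∫ ω, F ω ∂μ := by
  have hpull : μ[fun ω => F ω * H ω|m] =ᵐ[μ] fun ω => F ω * c := by
    filter_upwards [condExp_mul_of_stronglyMeasurable_left hF hFH hH, hc] with ω h h'
    exact h.trans (by rw [Pi.mul_apply, h'])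
  rw [← integral_condExp hm, integral_congr_ae hpull, integral_mul_const, mul_comm]

lemma memLp_two_mul_of_condExp_sq_ae_eq_const (hm : m ≤ m0) {g Z : Ω → ℝ}
    {c : ℝ} (hg : StronglyMeasurable[m] g) (hg2 : MemLp g 2 μ) (hZ : MemLp Z 2 μ)
    (hc : μ[fun ω => Z ω ^ 2|m] =ᵐ[μ] fun _ => c) :
    MemLp (fun ω => g ω * Z ω) 2 μ := by
  -- truncate `g ^ 2` at level `n`, pull it out of the conditional expectation, and let `n → ∞`
  set G : ℕ → Ω → ℝ := fun n ω => min (g ω ^ 2) n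
  have hGm : ∀ n, StronglyMeasurable[m] (G n) := fun n =>
    ((continuous_pow 2).min continuous_const).comp_stronglyMeasurable hg
  have hG0 : ∀ n ω, 0 ≤ G n ω := fun n ω => le_min (sq_nonneg _) n.cast_nonneg
  have hGle : ∀ n ω, G n ω ≤ g ω ^ 2 := fun n ω => min_le_left _ _
  have hGi : ∀ n, Integrable (G n) μ := fun n =>
    hg2.integrable_sq.mono' ((hGm n).mono hm).aestronglyMeasurable
      (.of_forall fun ω => (Real.norm_of_nonneg (hG0 n ω)).trans_le (hGle n ω))
  have hGZ : ∀ n, Integrable (fun ω => G n ω * Z ω ^ 2) μ := fun n =>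
    hZ.integrable_sq.bdd_mul ((hGm n).mono hm).aestronglyMeasurable
      (.of_forall fun ω => (Real.norm_of_nonneg (hG0 n ω)).trans_le (min_le_right _ _))
  have hbound : ∀ n, ∫ ω, G n ω * Z ω ^ 2 ∂μ ≤ |c| * ∫ ω, g ω ^ 2 ∂μ := fun n => by
    rw [integral_mul_eq_of_condExp_ae_eq_const hm (hGm n) hZ.integrable_sq (hGZ n) hc]
    exact (le_abs_self _).trans (by
      rw [abs_mul, abs_of_nonneg (integral_nonneg (hG0 n))]
      exact mul_le_mul_of_nonneg_left (integral_mono (hGi n) hg2.integrable_sq (hGle n))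
        (abs_nonneg c))
  have hlim : Tendsto (fun n => ∫⁻ ω, ENNReal.ofReal (G n ω * Z ω ^ 2) ∂μ) atTop
      (𝓝 (∫⁻ ω, ENNReal.ofReal ((g ω * Z ω) ^ 2) ∂μ)) := by
    refine lintegral_tendsto_of_tendsto_of_monotone
      (fun n => (hGZ n).aemeasurable.ennreal_ofReal) (.of_forall fun ω i j hij => ?_)
      (.of_forall fun ω => tendsto_atTop_of_eventually_const (i₀ := ⌈g ω ^ 2⌉₊) fun n hn => ?_)
    · exact ENNReal.ofReal_le_ofReal (mul_le_mul_of_nonneg_right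
        (min_le_min le_rfl (Nat.cast_le.2 hij)) (sq_nonneg _))
    · show ENNReal.ofReal (min (g ω ^ 2) n * Z ω ^ 2) = _
      rw [min_eq_left ((Nat.le_ceil _).trans (Nat.cast_le.2 hn)), mul_pow]
  have hmeas : AEStronglyMeasurable (fun ω => g ω * Z ω) μ :=
    (hg.mono hm).aestronglyMeasurable.mul hZ.1
  refine (memLp_two_iff_integrable_sq hmeas).2 ⟨hmeas.pow 2, ?_⟩
  rw [hasFiniteIntegral_iff_ofReal (.of_forall fun ω => sq_nonneg _)]
  refine (le_of_tendsto' hlim fun n => ?_).trans_lt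
    (ENNReal.ofReal_lt_top (r := |c| * ∫ ω, g ω ^ 2 ∂μ))
  rw [← ofReal_integral_eq_lintegral_ofReal (hGZ n)
    (.of_forall fun ω => mul_nonneg (hG0 n ω) (sq_nonneg _))]
  exact ENNReal.ofReal_le_ofReal (hbound n)

variable {ι : Type*} [Fintype ι] {a : Ω → ℝ} {Y Z : ι → Ω → ℝ}
  {c : ι → ι → ℝ}

lemma memLp_two_add_sum_mul (hm : m ≤ m0) (ha2 : MemLp a 2 μ)
    (hY : ∀ i, StronglyMeasurable[m] (Y i)) (hY2 : ∀ i, MemLp (Y i) 2 μ)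
    (hZ2 : ∀ i, MemLp (Z i) 2 μ)
    (hcov : ∀ i j, μ[fun ω => Z i ω * Z j ω|m] =ᵐ[μ] fun _ => c i j) :
    MemLp (fun ω => a ω + ∑ i, Y i ω * Z i ω) 2 μ :=
  ha2.add (memLp_finsetSum _ fun i _ => memLp_two_mul_of_condExp_sq_ae_eq_const hm (hY i)
    (hY2 i) (hZ2 i) (by simpa only [sq] using hcov i i))

lemma integral_sq_add_sum_mul_eq (hm : m ≤ m0) (ha : StronglyMeasurable[m] a)
    (ha2 : MemLp a 2 μ) (hY : ∀ i, StronglyMeasurable[m] (Y i)) (hY2 : ∀ i, MemLp (Y i) 2 μ)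
    (hZ2 : ∀ i, MemLp (Z i) 2 μ) (hmean : ∀ i, μ[Z i|m] =ᵐ[μ] 0)
    (hcov : ∀ i j, μ[fun ω => Z i ω * Z j ω|m] =ᵐ[μ] fun _ => c i j) :
    ∫ ω, (a ω + ∑ i, Y i ω * Z i ω) ^ 2 ∂μ
      = ∫ ω, a ω ^ 2 ∂μ + ∑ i, ∑ j, c i j * ∫ ω, Y i ω * Y j ω ∂μ := by
  have hYZ : ∀ i, MemLp (fun ω => Y i ω * Z i ω) 2 μ := fun i =>
    memLp_two_mul_of_condExp_sq_ae_eq_const hm (hY i) (hY2 i) (hZ2 i)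
      (by simpa only [sq] using hcov i i)
  have hcross : ∀ i, Integrable (fun ω => a ω * Y i ω * Z i ω) μ := fun i =>
    (ha2.integrable_mul (hYZ i)).congr (.of_forall fun ω => (mul_assoc _ _ _).symm)
  have hquad : ∀ i j, Integrable (fun ω => Y i ω * Y j ω * (Z i ω * Z j ω)) μ := fun i j =>
    ((hYZ i).integrable_mul (hYZ j)).congr (.of_forall fun ω => mul_mul_mul_comm _ _ _ _)
  have hterm : ∀ i, Integrable (fun ω => 2 * (a ω * Y i ω * Z i ω)
      + ∑ j, Y i ω * Y j ω * (Z i ω * Z j ω)) μ := fun i =>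
    ((hcross i).const_mul 2).add (integrable_finsetSum _ fun j _ => hquad i j)
  have hexpand : ∀ ω, (a ω + ∑ i, Y i ω * Z i ω) ^ 2 = a ω ^ 2
      + ∑ i, (2 * (a ω * Y i ω * Z i ω) + ∑ j, Y i ω * Y j ω * (Z i ω * Z j ω)) := by
    intro ω
    rw [add_sq, sq (∑ i, _), Finset.sum_mul_sum, Finset.mul_sum, add_assoc,
      ← Finset.sum_add_distrib]
    congr 1
    refine Finset.sum_congr rfl fun i _ => ?_
    congr 1
    · ring
    · exact Finset.sum_congr rfl fun j _ => mul_mul_mul_comm _ _ _ _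
  simp_rw [hexpand]
  rw [integral_add ha2.integrable_sq (integrable_finsetSum _ fun i _ => hterm i),
    integral_finsetSum _ fun i _ => hterm i]
  congr 1
  refine Finset.sum_congr rfl fun i _ => ?_
  rw [integral_add ((hcross i).const_mul 2) (integrable_finsetSum _ fun j _ => hquad i j),
    integral_finsetSum _ fun j _ => hquad i j, integral_const_mul,
    integral_mul_eq_of_condExp_ae_eq_const hm (F := fun ω => a ω * Y i ω) (c := 0)
      (ha.mul (hY i)) ((hZ2 i).integrable one_le_two) (hcross i) (hmean i),
    zero_mul, mul_zero, zero_add]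
  exact Finset.sum_congr rfl fun j _ =>
    integral_mul_eq_of_condExp_ae_eq_const hm (F := fun ω => Y i ω * Y j ω)
      ((hY i).mul (hY j)) ((hZ2 i).integrable_mul (hZ2 j)) (hquad i j) (hcov i j)

end ConditionalMoments

section SecondMoment

variable {Ω : Type*} {m m0 : MeasurableSpace Ω} {μ : Measure Ω} {l n : Type*} [Fintype n]

lemma integral_sum_sq_mulVec_eq [Fintype l] (A : Matrix l n ℝ) {x : Ω → n → ℝ}
    (hx : ∀ q, MemLp (fun ω => x ω q) 2 μ) :
    ∫ ω, ∑ p, (A *ᵥ x ω) p ^ 2 ∂μ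
      = ∑ p, ∑ q, ∑ q', A p q * A p q' * ∫ ω, x ω q * x ω q' ∂μ := by
  have hint : ∀ p q q', Integrable (fun ω => A p q * A p q' * (x ω q * x ω q')) μ :=
    fun p q q' => ((hx q).integrable_mul (hx q')).const_mul _
  have hexpand : ∀ ω, ∑ p, (A *ᵥ x ω) p ^ 2
      = ∑ p, ∑ q, ∑ q', A p q * A p q' * (x ω q * x ω q') := fun ω => by
    simp only [sq]
    exact Finset.sum_congr rfl fun p _ => (Finset.sum_mul_sum _ _ _ _).trans <|
      Finset.sum_congr rfl fun q _ => Finset.sum_congr rfl fun q' _ => mul_mul_mul_comm _ _ _ _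
  simp_rw [hexpand]
  rw [integral_finsetSum _ fun p _ => integrable_finsetSum _ fun q _ =>
    integrable_finsetSum _ fun q' _ => hint p q q']
  refine Finset.sum_congr rfl fun p _ => ?_
  rw [integral_finsetSum _ fun q _ => integrable_finsetSum _ fun q' _ => hint p q q']
  refine Finset.sum_congr rfl fun q _ => ?_
  rw [integral_finsetSum _ fun q' _ => hint p q q']
  exact Finset.sum_congr rfl fun q' _ => integral_const_mul _ _

lemma memLp_mulVec_apply (A : Matrix l n ℝ) {x : Ω → n → ℝ}
    (hx : ∀ q, MemLp (fun ω => x ω q) 2 μ) (p : l) : MemLp (fun ω => (A *ᵥ x ω) p) 2 μ :=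
  memLp_finsetSum _ fun q _ => (hx q).const_mul (A p q)

lemma integral_sum_sq_mulVec_le [Fintype l] [DecidableEq n] (A : Matrix l n ℝ)
    {x : Ω → n → ℝ} (hx : ∀ q, MemLp (fun ω => x ω q) 2 μ) :
    ∫ ω, ∑ p, (A *ᵥ x ω) p ^ 2 ∂μ ≤ ‖A‖ ^ 2 * ∫ ω, ∑ q, x ω q ^ 2 ∂μ :=
  (integral_mono (integrable_finsetSum _ fun p _ => (memLp_mulVec_apply A hx p).integrable_sq)
    ((integrable_finsetSum _ fun q _ => (hx q).integrable_sq).const_mul _)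
    fun ω => A.sum_sq_mulVec_le (x ω)).trans_eq (integral_const_mul _ _)

variable {U : Type*} [NormedAddCommGroup U] [InnerProductSpace ℝ U] [CompleteSpace U]
  [IsFiniteMeasure μ] [Fintype l] [DecidableEq n] {w : ℕ → ℝ} {f : ℕ → U} {C : U →L[ℝ] Matrix l n ℝ}
  {c : ℝ} {ξ : Ω → U} {x : Ω → n → ℝ}

lemma integral_sum_sq_mulVec_add_noise_eq (hm : m ≤ m0) (hw : Summable w)
    (hCf : ∀ k, ‖C (f k)‖ ≤ c) (hξ : MemLp ξ 2 μ)
    (hmean : ∀ u, μ[fun ω => ⟪ξ ω, u⟫|m] =ᵐ[μ] 0)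
    (hcov : ∀ u u', μ[fun ω => ⟪ξ ω, u⟫ * ⟪ξ ω, u'⟫|m]
      =ᵐ[μ] fun _ => ∑' k, w k * (⟪f k, u⟫ * ⟪f k, u'⟫))
    (D : Matrix l n ℝ) (hx : ∀ q, StronglyMeasurable[m] fun ω => x ω q)
    (hx2 : ∀ q, MemLp (fun ω => x ω q) 2 μ) :
    ∫ ω, ∑ p, ((D + C (ξ ω)) *ᵥ x ω) p ^ 2 ∂μ
      = ∫ ω, ∑ p, (D *ᵥ x ω) p ^ 2 ∂μ + ∑' k, w k * ∫ ω, ∑ p, (C (f k) *ᵥ x ω) p ^ 2 ∂μ := by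
  have hrow : ∀ ω p, ((D + C (ξ ω)) *ᵥ x ω) p
      = (D *ᵥ x ω) p + ∑ q, x ω q * ⟪ξ ω, C.entryRiesz p q⟫ := fun ω p => by
    rw [add_mulVec, Pi.add_apply]
    exact congrArg _ (Finset.sum_congr rfl fun q _ => by rw [C.inner_entryRiesz, mul_comm])
  have hDx : ∀ p, StronglyMeasurable[m] fun ω => (D *ᵥ x ω) p := fun p =>
    Finset.stronglyMeasurable_fun_sum _ fun q _ => (hx q).const_mul (D p q)
  have hZ2 : ∀ u, MemLp (fun ω => ⟪ξ ω, u⟫) 2 μ := hξ.inner_const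
  have hcov' : ∀ p q q', μ[fun ω => ⟪ξ ω, C.entryRiesz p q⟫ * ⟪ξ ω, C.entryRiesz p q'⟫|m]
      =ᵐ[μ] fun _ => ∑' k, w k * (C (f k) p q * C (f k) p q') := fun p q q' => by
    simpa only [C.inner_entryRiesz] using hcov (C.entryRiesz p q) (C.entryRiesz p q')
  have hsummable : ∀ p q q', Summable fun k => w k * (C (f k) p q * C (f k) p q') :=
    fun p q q' => .of_norm_bounded (hw.abs.mul_right (c * c)) fun k => by
      have h₁ := (abs_apply_le_l2_opNorm _ p q).trans (hCf k)
      have h₂ := (abs_apply_le_l2_opNorm _ p q').trans (hCf k)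
      rw [Real.norm_eq_abs, abs_mul, abs_mul]
      exact mul_le_mul_of_nonneg_left (mul_le_mul h₁ h₂ (abs_nonneg _)
        ((abs_nonneg _).trans h₁)) (abs_nonneg _)
  calc ∫ ω, ∑ p, ((D + C (ξ ω)) *ᵥ x ω) p ^ 2 ∂μ
      = ∑ p, ∫ ω, ((D *ᵥ x ω) p + ∑ q, x ω q * ⟪ξ ω, C.entryRiesz p q⟫) ^ 2 ∂μ := by
        simp_rw [hrow]
        exact integral_finsetSum _ fun p _ => (memLp_two_add_sum_mul hm
          (memLp_mulVec_apply D hx2 p) hx hx2 (fun q => hZ2 _) (hcov' p)).integrable_sq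
    _ = ∑ p, (∫ ω, (D *ᵥ x ω) p ^ 2 ∂μ + ∑ q, ∑ q',
          (∑' k, w k * (C (f k) p q * C (f k) p q')) * ∫ ω, x ω q * x ω q' ∂μ) :=
        Finset.sum_congr rfl fun p _ => integral_sq_add_sum_mul_eq hm (hDx p)
          (memLp_mulVec_apply D hx2 p) hx hx2 (fun q => hZ2 _) (fun q => hmean _) (hcov' p)
    _ = _ := by
        rw [Finset.sum_add_distrib, integral_finsetSum _ fun p _ =>
          (memLp_mulVec_apply D hx2 p).integrable_sq]
        congr 1
        simp_rw [integral_sum_sq_mulVec_eq _ hx2, Finset.mul_sum]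
        refine (HasSum.tsum_eq ?_).symm
        exact hasSum_sum fun p _ => hasSum_sum fun q _ => hasSum_sum fun q' _ => by
          simpa only [mul_assoc] using (hsummable p q q').hasSum.mul_right _

lemma integral_sum_sq_mulVec_add_noise_le (hm : m ≤ m0) (hw0 : ∀ k, 0 ≤ w k)
    (hw : Summable w) (hCf : ∀ k, ‖C (f k)‖ ≤ c) (hξ : MemLp ξ 2 μ)
    (hmean : ∀ u, μ[fun ω => ⟪ξ ω, u⟫|m] =ᵐ[μ] 0)
    (hcov : ∀ u u', μ[fun ω => ⟪ξ ω, u⟫ * ⟪ξ ω, u'⟫|m]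
      =ᵐ[μ] fun _ => ∑' k, w k * (⟪f k, u⟫ * ⟪f k, u'⟫))
    (D : Matrix l n ℝ) (hx : ∀ q, StronglyMeasurable[m] fun ω => x ω q)
    (hx2 : ∀ q, MemLp (fun ω => x ω q) 2 μ) :
    ∫ ω, ∑ p, ((D + C (ξ ω)) *ᵥ x ω) p ^ 2 ∂μ
      ≤ (‖D‖ ^ 2 + (∑' k, w k) * c ^ 2) * ∫ ω, ∑ q, x ω q ^ 2 ∂μ := by
  set s := ∫ ω, ∑ q, x ω q ^ 2 ∂μ
  have hs : 0 ≤ s := integral_nonneg fun ω => Finset.sum_nonneg fun q _ => sq_nonneg _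
  have hnoise : ∀ k, w k * ∫ ω, ∑ p, (C (f k) *ᵥ x ω) p ^ 2 ∂μ ≤ w k * (c ^ 2 * s) := fun k =>
    mul_le_mul_of_nonneg_left ((integral_sum_sq_mulVec_le _ hx2).trans
      (mul_le_mul_of_nonneg_right (pow_le_pow_left₀ (norm_nonneg _) (hCf k) 2) hs)) (hw0 k)
  have hnoise0 : ∀ k, 0 ≤ w k * ∫ ω, ∑ p, (C (f k) *ᵥ x ω) p ^ 2 ∂μ := fun k =>
    mul_nonneg (hw0 k) (integral_nonneg fun ω => Finset.sum_nonneg fun p _ => sq_nonneg _)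
  rw [integral_sum_sq_mulVec_add_noise_eq hm hw hCf hξ hmean hcov D hx hx2]
  calc _ ≤ ‖D‖ ^ 2 * s + ∑' k, w k * (c ^ 2 * s) :=
        add_le_add (integral_sum_sq_mulVec_le D hx2) <|
          (Summable.of_nonneg_of_le hnoise0 hnoise (hw.mul_right _)).tsum_le_tsum hnoise
            (hw.mul_right _)
    _ = (‖D‖ ^ 2 + (∑' k, w k) * c ^ 2) * s := by rw [tsum_mul_right]; ring

end SecondMoment

section Stability

variable {Ω : Type*} {m0 : MeasurableSpace Ω} {μ : Measure Ω} {ℱ : Filtration ℕ m0} {N : ℕ}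
  {D : Matrix (Fin N) (Fin N) ℝ} {E : ℕ → Ω → Matrix (Fin N) (Fin N) ℝ}
  {X : ℕ → Ω → Fin N → ℝ}

lemma IsSolution.stronglyMeasurable_apply (hX : IsSolution μ ℱ D E X)
    (hE : ∀ j p q, StronglyMeasurable[ℱ (j + 1)] fun ω => E j ω p q) (j : ℕ) (q : Fin N) :
    StronglyMeasurable[ℱ j] fun ω => X j ω q := by
  induction j generalizing q with
  | zero => exact hX.2.1 q
  | succ j ih =>
    simp_rw [hX.1 j]
    show StronglyMeasurable[ℱ (j + 1)] fun ω => ∑ r, (D q r + E j ω q r) * X j ω r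
    exact Finset.stronglyMeasurable_fun_sum _ fun r _ =>
      (stronglyMeasurable_const.add (hE j q r)).mul ((ih r).mono (ℱ.mono j.le_succ))

lemma secondMoment_nonneg (j : ℕ) : 0 ≤ secondMoment μ X j :=
  integral_nonneg fun _ => Finset.sum_nonneg fun _ _ => sq_nonneg _

lemma asympMeanSquareStable_of_secondMoment_succ_le {r : ℝ} (hr0 : 0 ≤ r) (hr1 : r < 1)
    (h : ∀ X, IsSolution μ ℱ D E X → ∀ j, secondMoment μ X (j + 1) ≤ r * secondMoment μ X j) :
    AsympMeanSquareStable μ ℱ D E := by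
  have hgeom : ∀ X, IsSolution μ ℱ D E X → ∀ j,
      secondMoment μ X j ≤ r ^ j * secondMoment μ X 0 := fun X hX j => by
    induction j with
    | zero => rw [pow_zero, one_mul]
    | succ j ih => calc
        secondMoment μ X (j + 1) ≤ r * secondMoment μ X j := h X hX j
        _ ≤ r * (r ^ j * secondMoment μ X 0) := mul_le_mul_of_nonneg_left ih hr0
        _ = r ^ (j + 1) * secondMoment μ X 0 := by ring
  refine ⟨fun ε hε => ⟨ε, hε, fun X hX h0 j => ?_⟩, 1, one_pos, fun X hX _ => ?_⟩
  · exact ((hgeom X hX j).trans (mul_le_of_le_one_left (secondMoment_nonneg 0)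
      (pow_le_one₀ hr0 hr1.le))).trans_lt h0
  · refine squeeze_zero secondMoment_nonneg (hgeom X hX) ?_
    simpa using (tendsto_pow_atTop_nhds_zero_of_lt_one hr0 hr1).mul_const (secondMoment μ X 0)

end Stability

theorem stmt8_general
    {Ω U : Type*} {m0 : MeasurableSpace Ω} (μ : Measure Ω) [IsProbabilityMeasure μ]
    [NormedAddCommGroup U] [InnerProductSpace ℝ U] [CompleteSpace U]
    (ℱ : Filtration ℕ m0) (N : ℕ) (Δt : ℝ) (hΔt : 0 < Δt)
    (f : ℕ → U) (hf : Orthonormal ℝ f)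
    (muQ : ℕ → ℝ) (hmu : ∀ k, 0 ≤ muQ k) (hsum : Summable muQ)
    (ΔL : ℕ → Ω → U)
    (hmeasL : ∀ j, StronglyMeasurable[ℱ (j + 1)] (ΔL j))
    (hL2L : ∀ j, MemLp (ΔL j) 2 μ)
    (hmean : ∀ j (u : U), μ[(fun ω => ⟪ΔL j ω, u⟫) | ℱ j] =ᵐ[μ] 0)
    (hcondcov : ∀ j (u u' : U),
      μ[(fun ω => ⟪ΔL j ω, u⟫ * ⟪ΔL j ω, u'⟫) | ℱ j]
        =ᵐ[μ] fun _ => ∫ ω, ⟪ΔL j ω, u⟫ * ⟪ΔL j ω, u'⟫ ∂μ)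
    (hcov : ∀ j (u u' : U), ∫ ω, ⟪ΔL j ω, u⟫ * ⟪ΔL j ω, u'⟫ ∂μ
      = Δt * ∑' k, muQ k * (⟪f k, u⟫ * ⟪f k, u'⟫))
    (C : U →ₗ[ℝ] Matrix (Fin N) (Fin N) ℝ) (nC : ℝ)
    (hC : ∀ u : U, ‖Matrix.toEuclideanCLM (𝕜 := ℝ) (C u)‖ ≤ nC * ‖u‖)
    (D : Matrix (Fin N) (Fin N) ℝ)
    (Kq : Matrix (Fin N × Fin N) (Fin N × Fin N) ℝ)
    (hKq : Kq = Matrix.of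
      (fun p q : Fin N × Fin N => ∑' k, muQ k * (C (f k) p.1 q.1 * C (f k) p.2 q.2))) :
    ‖Matrix.toEuclideanCLM (𝕜 := ℝ) Kq‖ ≤ (∑' k, muQ k) * nC ^ 2
      ∧ (‖Matrix.toEuclideanCLM (𝕜 := ℝ) D‖ ^ 2 + Δt * (∑' k, muQ k) * nC ^ 2 < 1 →
          AsympMeanSquareStable μ ℱ D (fun j ω => C (ΔL j ω))) := by
  set Cc : U →L[ℝ] Matrix (Fin N) (Fin N) ℝ := C.mkContinuous nC hC
  have hCf : ∀ k, ‖Cc (f k)‖ ≤ nC := fun k => (hC (f k)).trans_eq (by rw [hf.1 k, mul_one])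
  refine ⟨hKq ▸ l2_opNorm_tsum_kronecker_self_le hmu hsum hCf, fun hlt => ?_⟩
  have hE : ∀ j p q, StronglyMeasurable[ℱ (j + 1)] fun ω => C (ΔL j ω) p q := fun j p q =>
    (Cc.continuous.matrix_elem p q).comp_stronglyMeasurable (hmeasL j)
  have hcov' : ∀ j u u', μ[fun ω => ⟪ΔL j ω, u⟫ * ⟪ΔL j ω, u'⟫|ℱ j]
      =ᵐ[μ] fun _ => ∑' k, Δt * muQ k * (⟪f k, u⟫ * ⟪f k, u'⟫) := fun j u u' => by
    simpa only [hcov, ← tsum_mul_left, mul_assoc] using hcondcov j u u'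
  have hr0 : 0 ≤ ‖D‖ ^ 2 + Δt * (∑' k, muQ k) * nC ^ 2 :=
    add_nonneg (sq_nonneg _) (mul_nonneg (mul_nonneg hΔt.le (tsum_nonneg hmu)) (sq_nonneg _))
  refine asympMeanSquareStable_of_secondMoment_succ_le hr0 hlt fun X hX j => ?_
  have hstep := integral_sum_sq_mulVec_add_noise_le (ℱ.le j)
    (fun k => mul_nonneg hΔt.le (hmu k)) (hsum.mul_left Δt) hCf (hL2L j) (hmean j) (hcov' j) D
    (hX.stronglyMeasurable_apply hE j) (hX.2.2 j)
  rw [tsum_mul_left] at hstep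
  simp only [secondMoment, hX.1 j]
  exact hstep

/-- **Corollary 3.3.** In the Euler–Maruyama setting
`X^{j+1} = (D + C ΔL^j)X^j` with `S = D ⊗ D + Δt (C ⊗ C) q`, where
`q = Σ_k μ_k f_k ⊗ f_k` with `μ_k ≥ 0` and `Σ_k μ_k = Tr(Q) < ∞`, one has the bound
`‖(C ⊗ C) q‖_{L(V⊗V)} ≤ Tr(Q) ‖C‖²_{L(U;L(V))}`, and hence
`‖D‖²_{L(V)} + Δt Tr(Q) ‖C‖²_{L(U;L(V))} < 1` implies asymptotic mean-square stability.
(Here `nC` is the operator norm bound for `C` and operator norms on the tensor space are those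
of the induced Euclidean operators.) -/
theorem stmt8
    {Ω U : Type*} {m0 : MeasurableSpace Ω} (μ : Measure Ω) [IsProbabilityMeasure μ]
    [NormedAddCommGroup U] [InnerProductSpace ℝ U] [CompleteSpace U]
    (ℱ : Filtration ℕ m0) (N : ℕ) (Δt : ℝ) (hΔt : 0 < Δt)
    (f : ℕ → U) (hf : Orthonormal ℝ f)
    (muQ : ℕ → ℝ) (hmu : ∀ k, 0 ≤ muQ k) (hsum : Summable muQ)
    (ΔL : ℕ → Ω → U)
    (hmeasL : ∀ j, StronglyMeasurable[ℱ (j + 1)] (ΔL j))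
    (hL2L : ∀ j, MemLp (ΔL j) 2 μ)
    (hmean : ∀ j (u : U), μ[(fun ω => ⟪ΔL j ω, u⟫) | ℱ j] =ᵐ[μ] 0)
    (hcondcov : ∀ j (u u' : U),
      μ[(fun ω => ⟪ΔL j ω, u⟫ * ⟪ΔL j ω, u'⟫) | ℱ j]
        =ᵐ[μ] fun _ => ∫ ω, ⟪ΔL j ω, u⟫ * ⟪ΔL j ω, u'⟫ ∂μ)
    (hcov : ∀ j (u u' : U), ∫ ω, ⟪ΔL j ω, u⟫ * ⟪ΔL j ω, u'⟫ ∂μ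
      = Δt * ∑' k, muQ k * (⟪f k, u⟫ * ⟪f k, u'⟫))
    (hspan : ∀ j ω, ΔL j ω ∈ (Submodule.span ℝ (Set.range f)).topologicalClosure)
    (C : U →ₗ[ℝ] Matrix (Fin N) (Fin N) ℝ) (nC : ℝ) (hnC0 : 0 ≤ nC)
    (hC : ∀ u : U, ‖Matrix.toEuclideanCLM (𝕜 := ℝ) (C u)‖ ≤ nC * ‖u‖)
    (D : Matrix (Fin N) (Fin N) ℝ)
    (Kq : Matrix (Fin N × Fin N) (Fin N × Fin N) ℝ)
    (hKq : Kq = Matrix.of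
      (fun p q : Fin N × Fin N => ∑' k, muQ k * (C (f k) p.1 q.1 * C (f k) p.2 q.2))) :
    ‖Matrix.toEuclideanCLM (𝕜 := ℝ) Kq‖ ≤ (∑' k, muQ k) * nC ^ 2
      ∧ (‖Matrix.toEuclideanCLM (𝕜 := ℝ) D‖ ^ 2 + Δt * (∑' k, muQ k) * nC ^ 2 < 1 →
          AsympMeanSquareStable μ ℱ D (fun j ω => C (ΔL j ω))) :=
  stmt8_general μ ℱ N Δt hΔt f hf muQ hmu hsum ΔL hmeasL hL2L hmean hcondcov hcov C nC hC D Kq hKq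

end
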